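/- Let X, Y, W ∈ ℝ[t] with W ≠ 0, define U := X'·W − X·W' and V := Y'·W − Y·W', and assume (U,V) ≠ (0,0). Set w := deg W, r := max(deg X, deg Y), s := max(deg U, deg V), and assume w ≥ r. Then the polynomial P̃ := U·(W·x − X) + V·(W·y − Y), viewed as a polynomial in t with coefficients in ℝ[x,y], has degree exactly s + w in t, and its coefficient of t^{s+w} equals c(U,s)·(c(W,w)·x − c(X,w)) + c(V,s)·(c(W,w)·y − c(Y,w)), which is a nonzero polynomial of degree 1 in x, y. -/
import Mathlib


/-- Lift a univariate real polynomial in `t` to a polynomial in `t` whose coefficients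
are polynomials in the two variables `x, y`. -/
noncomputable def liftT (p : Polynomial ℝ) : Polynomial (MvPolynomial (Fin 2) ℝ) :=
  p.map MvPolynomial.C

/-- `P̃ := U·(W·x − X) + V·(W·y − Y)`, viewed as a polynomial in `t` with
coefficients in `ℝ[x,y]` (where `x = X 0`, `y = X 1`). -/
noncomputable def Ptilde (X Y W U V : Polynomial ℝ) :
    Polynomial (MvPolynomial (Fin 2) ℝ) :=
  liftT U * (liftT W * Polynomial.C (MvPolynomial.X 0) - liftT X)
    + liftT V * (liftT W * Polynomial.C (MvPolynomial.X 1) - liftT Y)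

lemma liftT_coeff (p : Polynomial ℝ) (k : ℕ) :
    (liftT p).coeff k = MvPolynomial.C (p.coeff k) := Polynomial.coeff_map _ _

lemma liftT_natDegree (p : Polynomial ℝ) : (liftT p).natDegree = p.natDegree :=
  Polynomial.natDegree_map_eq_of_injective (MvPolynomial.C_injective (Fin 2) ℝ) p

lemma bracket_natDegree_le (W B : Polynomial ℝ) (i : Fin 2) (n : ℕ)
    (hW : W.natDegree ≤ n) (hB : B.natDegree ≤ n) :
    (liftT W * Polynomial.C (MvPolynomial.X i) - liftT B).natDegree ≤ n := by
  refine (Polynomial.natDegree_sub_le _ _).trans (max_le ?_ ?_)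
  · exact (Polynomial.natDegree_mul_le).trans
      (by simpa [liftT_natDegree, Polynomial.natDegree_C] using hW)
  · simpa [liftT_natDegree] using hB

lemma bracket_coeff (W B : Polynomial ℝ) (i : Fin 2) (n : ℕ) :
    (liftT W * Polynomial.C (MvPolynomial.X i) - liftT B).coeff n =
      MvPolynomial.C (W.coeff n) * MvPolynomial.X i - MvPolynomial.C (B.coeff n) := by
  rw [Polynomial.coeff_sub, Polynomial.coeff_mul_C, liftT_coeff, liftT_coeff]

lemma term_coeff (A W B : Polynomial ℝ) (i : Fin 2) (m n : ℕ)
    (hA : A.natDegree ≤ m) (hW : W.natDegree ≤ n) (hB : B.natDegree ≤ n) :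
    (liftT A * (liftT W * Polynomial.C (MvPolynomial.X i) - liftT B)).coeff (m + n)
      = MvPolynomial.C (A.coeff m) *
        (MvPolynomial.C (W.coeff n) * MvPolynomial.X i - MvPolynomial.C (B.coeff n)) := by
  rw [Polynomial.coeff_mul_add_eq_of_natDegree_le (by simpa [liftT_natDegree] using hA)
    (bracket_natDegree_le W B i n hW hB), liftT_coeff, bracket_coeff]

lemma term_natDegree_le (A W B : Polynomial ℝ) (i : Fin 2) (m n : ℕ)
    (hA : A.natDegree ≤ m) (hW : W.natDegree ≤ n) (hB : B.natDegree ≤ n) :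
    (liftT A * (liftT W * Polynomial.C (MvPolynomial.X i) - liftT B)).natDegree ≤ m + n :=
  Polynomial.natDegree_mul_le.trans
    (add_le_add (by simpa [liftT_natDegree] using hA) (bracket_natDegree_le W B i n hW hB))

-- facts about the coefficient polynomial
lemma lin_facts (a b c d e : ℝ) (hc : c ≠ 0) (hab : a ≠ 0 ∨ b ≠ 0) :
    (MvPolynomial.C a * (MvPolynomial.C c * MvPolynomial.X 0 - MvPolynomial.C d)
      + MvPolynomial.C b * (MvPolynomial.C c * MvPolynomial.X 1 - MvPolynomial.C e)
        : MvPolynomial (Fin 2) ℝ) ≠ 0 ∧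
    (MvPolynomial.C a * (MvPolynomial.C c * MvPolynomial.X 0 - MvPolynomial.C d)
      + MvPolynomial.C b * (MvPolynomial.C c * MvPolynomial.X 1 - MvPolynomial.C e)
        : MvPolynomial (Fin 2) ℝ).totalDegree = 1 := by
  set q : MvPolynomial (Fin 2) ℝ :=
    MvPolynomial.C a * (MvPolynomial.C c * MvPolynomial.X 0 - MvPolynomial.C d)
      + MvPolynomial.C b * (MvPolynomial.C c * MvPolynomial.X 1 - MvPolynomial.C e) with hq
  obtain ⟨i, hco⟩ : ∃ i : Fin 2, MvPolynomial.coeff (Finsupp.single i 1) q ≠ 0 := by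
    rcases hab with h | h
    · exact ⟨0, by simp [hq, MvPolynomial.coeff_X', Finsupp.single_eq_single_iff,
        mul_ne_zero h hc, eq_comm (a := (0 : Fin 2 →₀ ℕ)), Finsupp.single_eq_zero]⟩
    · exact ⟨1, by simp [hq, MvPolynomial.coeff_X', Finsupp.single_eq_single_iff,
        mul_ne_zero h hc, eq_comm (a := (0 : Fin 2 →₀ ℕ)), Finsupp.single_eq_zero]⟩
  have hne : q ≠ 0 := fun h => hco (by simp [h])
  have hge : 1 ≤ q.totalDegree := by
    have := MvPolynomial.le_totalDegree (p := q) (MvPolynomial.mem_support_iff.2 hco)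
    simpa using this
  have hle : q.totalDegree ≤ 1 := by
    refine (MvPolynomial.totalDegree_add _ _).trans (max_le ?_ ?_) <;>
    · refine (MvPolynomial.totalDegree_mul _ _).trans ?_
      simp only [MvPolynomial.totalDegree_C, zero_add]
      refine (MvPolynomial.totalDegree_sub _ _).trans (max_le ?_ (by simp))
      refine (MvPolynomial.totalDegree_mul _ _).trans (by simp)
  exact ⟨hne, le_antisymm hle hge⟩

theorem stmt2 (X Y W U V : Polynomial ℝ) (hW : W ≠ 0)
    (hU : U = Polynomial.derivative X * W - X * Polynomial.derivative W)
    (hV : V = Polynomial.derivative Y * W - Y * Polynomial.derivative W)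
    (hUV : ¬(U = 0 ∧ V = 0))
    (w r s : ℕ) (hw : w = W.natDegree) (hr : r = max X.natDegree Y.natDegree)
    (hs : s = max U.natDegree V.natDegree) (hwr : r ≤ w) :
    (Ptilde X Y W U V).natDegree = s + w ∧
    (Ptilde X Y W U V).coeff (s + w) =
      MvPolynomial.C (U.coeff s) *
          (MvPolynomial.C (W.coeff w) * MvPolynomial.X 0 - MvPolynomial.C (X.coeff w))
        + MvPolynomial.C (V.coeff s) *
          (MvPolynomial.C (W.coeff w) * MvPolynomial.X 1 - MvPolynomial.C (Y.coeff w)) ∧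
    (Ptilde X Y W U V).coeff (s + w) ≠ 0 ∧
    ((Ptilde X Y W U V).coeff (s + w)).totalDegree = 1 := by
  have hWw : W.coeff w ≠ 0 := by
    rw [hw, Polynomial.coeff_natDegree]
    exact Polynomial.leadingCoeff_ne_zero.mpr hW
  have hXw : X.natDegree ≤ w := le_trans (le_max_left _ _) (hr ▸ hwr)
  have hYw : Y.natDegree ≤ w := le_trans (le_max_right _ _) (hr ▸ hwr)
  have hWw' : W.natDegree ≤ w := hw.ge
  have hUs : U.natDegree ≤ s := hs ▸ le_max_left _ _
  have hVs : V.natDegree ≤ s := hs ▸ le_max_right _ _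
  have hab : U.coeff s ≠ 0 ∨ V.coeff s ≠ 0 := by
    rcases eq_or_ne V 0 with hV0 | hV0
    · have hU0 : U ≠ 0 := fun h => hUV ⟨h, hV0⟩
      left
      have : s = U.natDegree := by rw [hs, hV0, Polynomial.natDegree_zero, Nat.max_zero]
      rw [this, Polynomial.coeff_natDegree]
      exact Polynomial.leadingCoeff_ne_zero.mpr hU0
    · rcases le_or_gt U.natDegree V.natDegree with h | h
      · right
        have : s = V.natDegree := by rw [hs, max_eq_right h]
        rw [this, Polynomial.coeff_natDegree]
        exact Polynomial.leadingCoeff_ne_zero.mpr hV0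
      · left
        have hU0 : U ≠ 0 := by rintro rfl; simp at h
        have : s = U.natDegree := by rw [hs, max_eq_left h.le]
        rw [this, Polynomial.coeff_natDegree]
        exact Polynomial.leadingCoeff_ne_zero.mpr hU0
  have hcoeff : (Ptilde X Y W U V).coeff (s + w) =
      MvPolynomial.C (U.coeff s) *
          (MvPolynomial.C (W.coeff w) * MvPolynomial.X 0 - MvPolynomial.C (X.coeff w))
        + MvPolynomial.C (V.coeff s) *
          (MvPolynomial.C (W.coeff w) * MvPolynomial.X 1 - MvPolynomial.C (Y.coeff w)) := by
    rw [Ptilde, Polynomial.coeff_add, term_coeff U W X 0 s w hUs hWw' hXw,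
      term_coeff V W Y 1 s w hVs hWw' hYw]
  obtain ⟨hne, htd⟩ := lin_facts (U.coeff s) (V.coeff s) (W.coeff w) (X.coeff w) (Y.coeff w)
    hWw hab
  refine ⟨?_, hcoeff, hcoeff ▸ hne, hcoeff ▸ htd⟩
  refine le_antisymm ?_ (Polynomial.le_natDegree_of_ne_zero (hcoeff ▸ hne))
  exact (Polynomial.natDegree_add_le _ _).trans (max_le
    (term_natDegree_le U W X 0 s w hUs hWw' hXw)
    (term_natDegree_le V W Y 1 s w hVs hWw' hYw))
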